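/- arXiv:2003.06492 — 4 statements merged into one kernel-verified Lean document; each statement's English description precedes it below -/
import Mathlib

section
/- Let V ⊆ 𝒜, let M and M' be initial structures, s a state of M, s' a state of M', and n ≥ 0. If the computation trees Tr_n(s) of M and Tr_n(s') of M' are (𝒜∖V)-bisimilar, then the characterizing formulas satisfy F_V(Tr_n(s)) ≡ F_V(Tr_n(s')). -/
universe u

/-- A Kripke structure over a set of atoms: a finite nonempty set of states,
a serial transition relation, and a labeling function. -/
structure Kripke (Atom : Type u) where
  State : Type u
  stateFinite : Finite State
  stateNonempty : Nonempty State
  R : State → State → Prop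
  serial : ∀ s, ∃ t, R s t
  L : State → Set Atom

instance {Atom : Type u} (M : Kripke Atom) : Finite M.State := M.stateFinite

/-- A K-structure: a Kripke structure together with one of its states. -/
structure KStruct (Atom : Type u) where
  M : Kripke Atom
  s : M.State

/-- An initial structure: a Kripke structure with an initial state `s0`,
i.e. a state admitting a path visiting every state. -/
structure InitKripke (Atom : Type u) extends Kripke Atom where
  s0 : State
  initial : ∃ π : ℕ → State, π 0 = s0 ∧ (∀ n, R (π n) (π (n + 1))) ∧ ∀ t, ∃ n, π n = t

/-- The (initial) K-structure associated to an initial structure. -/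
def InitKripke.toKS {Atom : Type u} (M : InitKripke Atom) : KStruct Atom :=
  ⟨M.toKripke, M.s0⟩

/-- The approximations `B_n^V` of `V`-bisimilarity on K-structures. -/
def BRel {Atom : Type u} (V : Set Atom) : ℕ → KStruct Atom → KStruct Atom → Prop
  | 0 => fun K1 K2 => K1.M.L K1.s \ V = K2.M.L K2.s \ V
  | n + 1 => fun K1 K2 =>
      K1.M.L K1.s \ V = K2.M.L K2.s \ V ∧
      (∀ t1, K1.M.R K1.s t1 → ∃ t2, K2.M.R K2.s t2 ∧ BRel V n ⟨K1.M, t1⟩ ⟨K2.M, t2⟩) ∧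
      (∀ t2, K2.M.R K2.s t2 → ∃ t1, K1.M.R K1.s t1 ∧ BRel V n ⟨K1.M, t1⟩ ⟨K2.M, t2⟩)

/-- `V`-bisimilarity `K1 ↔_V K2` of K-structures. -/
def VBisim {Atom : Type u} (V : Set Atom) (K1 K2 : KStruct Atom) : Prop :=
  ∀ n, BRel V n K1 K2

/-- CTL formulas in existential normal form. -/
inductive CTL (Atom : Type u) : Type u
  | bot  : CTL Atom
  | top  : CTL Atom
  | atom (p : Atom) : CTL Atom
  | neg  (φ : CTL Atom) : CTL Atom
  | or   (φ ψ : CTL Atom) : CTL Atom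
  | EX   (φ : CTL Atom) : CTL Atom
  | EG   (φ : CTL Atom) : CTL Atom
  | EU   (φ ψ : CTL Atom) : CTL Atom

namespace CTL
variable {Atom : Type u}

def and (φ ψ : CTL Atom) : CTL Atom := .neg (.or (.neg φ) (.neg ψ))
def imp (φ ψ : CTL Atom) : CTL Atom := .or (.neg φ) ψ
def iff (φ ψ : CTL Atom) : CTL Atom := (φ.imp ψ).and (ψ.imp φ)
def AX (φ : CTL Atom) : CTL Atom := .neg (.EX (.neg φ))
def EF (φ : CTL Atom) : CTL Atom := .EU .top φ
def AF (φ : CTL Atom) : CTL Atom := .neg (.EG (.neg φ))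
def AG (φ : CTL Atom) : CTL Atom := .neg (.EU .top (.neg φ))

/-- The set of atoms occurring in a formula. -/
def vars : CTL Atom → Set Atom
  | .bot => ∅
  | .top => ∅
  | .atom p => {p}
  | .neg φ => vars φ
  | .or φ ψ => vars φ ∪ vars ψ
  | .EX φ => vars φ
  | .EG φ => vars φ
  | .EU φ ψ => vars φ ∪ vars ψ

end CTL

/-- The standard CTL satisfaction relation `(M,s) ⊨ φ`. -/
def Sat {Atom : Type u} (M : Kripke Atom) : CTL Atom → M.State → Prop
  | .bot => fun _ => False
  | .top => fun _ => True
  | .atom p => fun s => p ∈ M.L s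
  | .neg φ => fun s => ¬ Sat M φ s
  | .or φ ψ => fun s => Sat M φ s ∨ Sat M ψ s
  | .EX φ => fun s => ∃ t, M.R s t ∧ Sat M φ t
  | .EG φ => fun s => ∃ π : ℕ → M.State, π 0 = s ∧ (∀ n, M.R (π n) (π (n + 1))) ∧
      ∀ n, Sat M φ (π n)
  | .EU φ ψ => fun s => ∃ π : ℕ → M.State, π 0 = s ∧ (∀ n, M.R (π n) (π (n + 1))) ∧
      ∃ i, Sat M ψ (π i) ∧ ∀ j < i, Sat M φ (π j)

/-- Satisfaction for K-structures. -/
def KSat {Atom : Type u} (K : KStruct Atom) (φ : CTL Atom) : Prop := Sat K.M φ K.s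

/-- The set of models (initial K-structures) of a formula. -/
def CTLMod {Atom : Type u} (φ : CTL Atom) : Set (InitKripke Atom) :=
  {M | Sat M.toKripke φ M.s0}

def Entails {Atom : Type u} (φ ψ : CTL Atom) : Prop := CTLMod φ ⊆ CTLMod ψ

def CTLEquiv {Atom : Type u} (φ ψ : CTL Atom) : Prop := CTLMod φ = CTLMod ψ

/-- `IR φ V`: φ is irrelevant to the atoms in V. -/
def IR {Atom : Type u} (φ : CTL Atom) (V : Set Atom) : Prop :=
  ∃ ψ : CTL Atom, CTL.vars ψ ∩ V = ∅ ∧ CTLEquiv φ ψ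

/-- `V`-bisimilarity of depth-`n` computation trees rooted at `s1` (in `M1`) and `s2` (in `M2`). -/
def TreeBisim {Atom : Type u} (V : Set Atom) (M1 M2 : Kripke Atom) :
    ℕ → M1.State → M2.State → Prop
  | 0 => fun s1 s2 => M1.L s1 \ V = M2.L s2 \ V
  | n + 1 => fun s1 s2 =>
      M1.L s1 \ V = M2.L s2 \ V ∧
      (∀ t1, M1.R s1 t1 → ∃ t2, M2.R s2 t2 ∧ TreeBisim V M1 M2 n t1 t2) ∧
      (∀ t2, M2.R s2 t2 → ∃ t1, M1.R s1 t1 ∧ TreeBisim V M1 M2 n t1 t2)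

/-- Finite conjunction of a list of formulas. -/
def andList {Atom : Type u} : List (CTL Atom) → CTL Atom
  | [] => .top
  | φ :: l => φ.and (andList l)

/-- Finite disjunction of a list of formulas. -/
def orList {Atom : Type u} : List (CTL Atom) → CTL Atom
  | [] => .bot
  | φ :: l => .or φ (orList l)

/-- A list enumerating a subset of a finite type. -/
noncomputable def setToList {α : Type u} [Finite α] (s : Set α) : List α :=
  s.toFinite.toFinset.toList

/-- The list of `R`-successors of a state. -/
noncomputable def Kripke.succList {Atom : Type u} (M : Kripke Atom) (s : M.State) :
    List M.State :=
  setToList {t | M.R s t}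

/-- The characterizing formula `F_V(Tr_0(s))` of the depth-0 computation tree. -/
noncomputable def charTree0 {Atom : Type u} [Finite Atom] (M : Kripke Atom) (V : Set Atom)
    (s : M.State) : CTL Atom :=
  (andList ((setToList (V ∩ M.L s)).map CTL.atom)).and
    (andList ((setToList (V \ M.L s)).map fun q => CTL.neg (CTL.atom q)))

/-- The characterizing formula `F_V(Tr_n(s))` of the depth-`n` computation tree of `s`. -/
noncomputable def charTree {Atom : Type u} [Finite Atom] (M : Kripke Atom) (V : Set Atom) :
    ℕ → M.State → CTL Atom
  | 0 => fun s => charTree0 M V s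
  | k + 1 => fun s =>
      (andList ((M.succList s).map fun t => CTL.EX (charTree M V k t))).and
        ((CTL.AX (orList ((M.succList s).map (charTree M V k)))).and (charTree0 M V s))

/-- `dis_V(M,s,s',k)`: `s` and `s'` are `V`-distinguishable, and `k` is the least depth at which
their computation trees fail to be `(𝒜∖V)`-bisimilar. -/
def dis {Atom : Type u} (M : Kripke Atom) (V : Set Atom) (s s' : M.State) (k : ℕ) : Prop :=
  ¬ VBisim Vᶜ ⟨M, s⟩ ⟨M, s'⟩ ∧
  IsLeast {n | ¬ TreeBisim Vᶜ M M n s s'} k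

/-- The characterization number `ch(M,V)`. -/
noncomputable def ch {Atom : Type u} (M : Kripke Atom) (V : Set Atom) : ℕ :=
  letI := Classical.dec (∃ s s' k, dis M V s s' k)
  if ∃ s s' k, dis M V s s' k then
    sSup {k | ∃ s s', dis M V s s' k}
  else
    sInf {k | (fun s s' : M.State => BRel Vᶜ k ⟨M, s⟩ ⟨M, s'⟩) =
              (fun s s' : M.State => BRel Vᶜ (k + 1) ⟨M, s⟩ ⟨M, s'⟩)}

/-- The characterizing formula `F_V(M,s0)` of an initial K-structure on `V`. -/
noncomputable def charForm {Atom : Type u} [Finite Atom] (M : InitKripke Atom) (V : Set Atom) :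
    CTL Atom :=
  let T : M.State → CTL Atom := fun s => charTree M.toKripke V (ch M.toKripke V) s
  (T M.s0).and
    (andList ((setToList (Set.univ : Set M.State)).map fun s =>
      CTL.AG ((T s).imp
        ((andList ((M.toKripke.succList s).map fun t => CTL.EX (T t))).and
          (CTL.AX (orList ((M.toKripke.succList s).map T)))))))

/-- `ψ` is a result of forgetting `V` from `φ`. -/
def IsForget {Atom : Type u} (φ : CTL Atom) (V : Set Atom) (ψ : CTL Atom) : Prop :=
  CTL.vars ψ ∩ V = ∅ ∧
  CTLMod ψ = {K : InitKripke Atom | ∃ K' ∈ CTLMod φ, VBisim V K'.toKS K.toKS}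

/-!
Induction on `n`, for an arbitrary state `u` of an arbitrary structure: `u` satisfies
`F_V(Tr_n(s))` iff it satisfies `F_V(Tr_n(s'))`. At depth 0 the two formulas are literally
equal, since `(𝒜∖V)`-bisimilarity says that the labels of `s` and `s'` agree on `V`. At depth
`n+1` the `EX`-conjuncts and the `AX`-disjunction of one formula are matched with those of the
other through the back-and-forth clauses of the bisimulation.
-/

section CharTree
variable {Atom : Type u}

theorem TreeBisim.label_sdiff_eq {V : Set Atom} {M1 M2 : Kripke Atom} {n : ℕ}
    {s1 : M1.State} {s2 : M2.State} (h : TreeBisim V M1 M2 n s1 s2) :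
    M1.L s1 \ V = M2.L s2 \ V := by
  cases n with
  | zero => exact h
  | succ n => exact h.1

theorem TreeBisim.symm {V : Set Atom} {M1 M2 : Kripke Atom} {n : ℕ} {s1 : M1.State}
    {s2 : M2.State} (h : TreeBisim V M1 M2 n s1 s2) : TreeBisim V M2 M1 n s2 s1 := by
  induction n generalizing s1 s2 with
  | zero => exact Eq.symm h
  | succ n ih =>
    obtain ⟨hlabel, hforth, hback⟩ := h
    exact ⟨hlabel.symm, fun t2 ht2 => (hback t2 ht2).imp fun _ ⟨ht, hb⟩ => ⟨ht, ih hb⟩,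
      fun t1 ht1 => (hforth t1 ht1).imp fun _ ⟨ht, hb⟩ => ⟨ht, ih hb⟩⟩

variable (N : Kripke Atom)

theorem sat_and (φ ψ : CTL Atom) (u : N.State) :
    Sat N (φ.and ψ) u ↔ Sat N φ u ∧ Sat N ψ u := by
  simp only [CTL.and, Sat, not_or, not_not]

theorem sat_AX (φ : CTL Atom) (u : N.State) :
    Sat N φ.AX u ↔ ∀ w, N.R u w → Sat N φ w := by
  simp only [CTL.AX, Sat, not_exists, not_and, not_not]

theorem sat_andList (l : List (CTL Atom)) (u : N.State) :
    Sat N (andList l) u ↔ ∀ φ ∈ l, Sat N φ u := by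
  induction l with
  | nil => simp [andList, Sat]
  | cons φ l ih => simp [andList, sat_and, ih]

theorem sat_orList (l : List (CTL Atom)) (u : N.State) :
    Sat N (orList l) u ↔ ∃ φ ∈ l, Sat N φ u := by
  induction l with
  | nil => simp [orList, Sat]
  | cons φ l ih => simp [orList, Sat, ih]

theorem Kripke.mem_succList (s t : N.State) : t ∈ N.succList s ↔ N.R s t := by
  simp [Kripke.succList, setToList]

variable [Finite Atom] {V : Set Atom}

theorem charTree0_congr {M M' : Kripke Atom} {s : M.State} {s' : M'.State}
    (h : M.L s ∩ V = M'.L s' ∩ V) : charTree0 M V s = charTree0 M' V s' := by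
  have hpos : V ∩ M.L s = V ∩ M'.L s' := by rw [Set.inter_comm, h, Set.inter_comm]
  have hneg : V \ M.L s = V \ M'.L s' := by
    rw [← Set.sdiff_inter_self_eq_sdiff, h, Set.sdiff_inter_self_eq_sdiff]
  rw [charTree0, charTree0, hpos, hneg]

theorem TreeBisim.charTree0_eq {M M' : Kripke Atom} {n : ℕ} {s : M.State} {s' : M'.State}
    (h : TreeBisim Vᶜ M M' n s s') : charTree0 M V s = charTree0 M' V s' :=
  charTree0_congr (by simpa only [Set.sdiff_compl] using h.label_sdiff_eq)

theorem sat_charTree_succ (M : Kripke Atom) (k : ℕ) (s : M.State) (u : N.State) :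
    Sat N (charTree M V (k + 1) s) u ↔
      (∀ t, M.R s t → ∃ w, N.R u w ∧ Sat N (charTree M V k t) w) ∧
      (∀ w, N.R u w → ∃ t, M.R s t ∧ Sat N (charTree M V k t) w) ∧
      Sat N (charTree0 M V s) u := by
  simp only [charTree, sat_and, sat_andList, sat_AX, sat_orList, List.forall_mem_map]
  simp only [List.mem_map, exists_exists_and_eq_and, Kripke.mem_succList, Sat]

theorem sat_charTree_of_treeBisim {M M' : Kripke Atom} {n : ℕ} {s : M.State} {s' : M'.State}
    (h : TreeBisim Vᶜ M M' n s s') {u : N.State} (hu : Sat N (charTree M V n s) u) :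
    Sat N (charTree M' V n s') u := by
  induction n generalizing s s' u with
  | zero =>
    change Sat N (charTree0 M' V s') u
    rwa [← h.charTree0_eq]
  | succ k ih =>
    rw [sat_charTree_succ] at hu ⊢
    obtain ⟨hsucc, hpred, hroot⟩ := hu
    refine ⟨fun t' ht' => ?_, fun w hw => ?_, h.charTree0_eq ▸ hroot⟩
    · obtain ⟨t, ht, hb⟩ := h.2.2 t' ht'
      obtain ⟨w, hw, hsat⟩ := hsucc t ht
      exact ⟨w, hw, ih hb hsat⟩
    · obtain ⟨t, ht, hsat⟩ := hpred w hw
      obtain ⟨t', ht', hb⟩ := h.2.1 t ht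
      exact ⟨t', ht', ih hb hsat⟩

theorem sat_charTree_iff_of_treeBisim {M M' : Kripke Atom} {n : ℕ} {s : M.State}
    {s' : M'.State} (h : TreeBisim Vᶜ M M' n s s') (u : N.State) :
    Sat N (charTree M V n s) u ↔ Sat N (charTree M' V n s') u :=
  ⟨sat_charTree_of_treeBisim N h, sat_charTree_of_treeBisim N h.symm⟩

end CharTree

/-- if `Tr_n(s)` and `Tr_n(s')` are `(𝒜∖V)`-bisimilar, then
`F_V(Tr_n(s)) ≡ F_V(Tr_n(s'))`. -/
theorem treeBisim_charTree_equiv {Atom : Type u} [Finite Atom] (V : Set Atom)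
    (M M' : InitKripke Atom) (s : M.State) (s' : M'.State) (n : ℕ)
    (h : TreeBisim Vᶜ M.toKripke M'.toKripke n s s') :
    CTLEquiv (charTree M.toKripke V n s) (charTree M'.toKripke V n s') :=
  Set.ext fun K => sat_charTree_iff_of_treeBisim K.toKripke h K.s0
end

section
/- Let φ be a propositional formula (a CTL formula with no temporal operators) and V ⊆ 𝒜. If ψ is a result of forgetting V from φ in CTL, then ψ ≡ Forget(φ,V), where Forget is classical propositional forgetting defined by substitution. -/
universe u

/-- A propositional formula: a CTL formula with no temporal operators. -/
def CTL.Propositional {Atom : Type u} : CTL Atom → Prop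
  | .bot => True
  | .top => True
  | .atom _ => True
  | .neg φ => φ.Propositional
  | .or φ ψ => φ.Propositional ∧ ψ.Propositional
  | .EX _ => False
  | .EG _ => False
  | .EU _ _ => False

/-- Substitute the formula `χ` for the atom `p` in a formula. -/
def CTL.substAtom {Atom : Type u} [DecidableEq Atom] (p : Atom) (χ : CTL Atom) :
    CTL Atom → CTL Atom
  | .bot => .bot
  | .top => .top
  | .atom q => if q = p then χ else .atom q
  | .neg φ => .neg (substAtom p χ φ)
  | .or φ ψ => .or (substAtom p χ φ) (substAtom p χ ψ)
  | .EX φ => .EX (substAtom p χ φ)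
  | .EG φ => .EG (substAtom p χ φ)
  | .EU φ ψ => .EU (substAtom p χ φ) (substAtom p χ ψ)

/-- Classical propositional forgetting of a single atom: `φ[p/⊥] ∨ φ[p/⊤]`. -/
def forget1 {Atom : Type u} [DecidableEq Atom] (φ : CTL Atom) (p : Atom) : CTL Atom :=
  .or (CTL.substAtom p .bot φ) (CTL.substAtom p .top φ)

/-- Classical propositional forgetting of a list of atoms:
`Forget(φ,∅) = φ` and `Forget(φ,{p}∪V) = Forget(Forget(φ,p),V)`. -/
def forgetList {Atom : Type u} [DecidableEq Atom] (φ : CTL Atom) : List Atom → CTL Atom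
  | [] => φ
  | p :: l => forgetList (forget1 φ p) l

/-- Classical propositional forgetting of a (finite) set of atoms. -/
noncomputable def Forget {Atom : Type u} [DecidableEq Atom] [Finite Atom]
    (φ : CTL Atom) (V : Set Atom) : CTL Atom :=
  forgetList φ (setToList V)

/-!
On a propositional formula, satisfaction at a state depends only on the label of that state.
Classical forgetting of `V` is true under a valuation exactly when `φ` is true under some
valuation agreeing with it outside `V`. The root label of a model of `φ` is such a valuation
for any structure `V`-bisimilar to it; conversely, relabelling the root of a model of
`Forget φ V` by such a valuation gives a `V`-bisimilar model of `φ`.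
-/

lemma Set.diff_eq_diff_iff_forall {α : Type*} {A B S : Set α} :
    A \ S = B \ S ↔ ∀ q ∉ S, (q ∈ A ↔ q ∈ B) := by
  simp only [Set.ext_iff, Set.mem_sdiff]
  exact ⟨fun h q hq => by simpa [hq] using h q, fun h q => by by_cases hq : q ∈ S <;> simp [hq, h]⟩

lemma mem_setToList {α : Type u} [Finite α] {s : Set α} {x : α} :
    x ∈ setToList s ↔ x ∈ s := by
  simp [setToList]

namespace CTL
variable {Atom : Type u}

/-- Truth of a formula under the valuation `A`; temporal formulas are read as false. -/
def Eval (A : Set Atom) : CTL Atom → Prop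
  | .bot => False
  | .top => True
  | .atom p => p ∈ A
  | .neg φ => ¬ Eval A φ
  | .or φ ψ => Eval A φ ∨ Eval A ψ
  | .EX _ => False
  | .EG _ => False
  | .EU _ _ => False

theorem Propositional.sat_iff_eval (M : Kripke Atom) {φ : CTL Atom} (hφ : φ.Propositional)
    (s : M.State) : Sat M φ s ↔ Eval (M.L s) φ := by
  induction φ with
  | neg φ ih => exact not_congr (ih hφ)
  | or φ ψ ihφ ihψ => exact or_congr (ihφ hφ.1) (ihψ hφ.2)
  | EX | EG | EU => exact hφ.elim
  | _ => exact Iff.rfl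

theorem Propositional.substAtom [DecidableEq Atom] {p : Atom} {χ φ : CTL Atom}
    (hφ : φ.Propositional) (hχ : χ.Propositional) : (substAtom p χ φ).Propositional := by
  induction φ with
  | atom q => by_cases hq : q = p <;> simp [CTL.substAtom, hq, hχ, Propositional]
  | neg φ ih => exact ih hφ
  | or φ ψ ihφ ihψ => exact ⟨ihφ hφ.1, ihψ hφ.2⟩
  | _ => exact hφ

theorem Propositional.forgetList [DecidableEq Atom] {φ : CTL Atom} (hφ : φ.Propositional)
    (l : List Atom) : (_root_.forgetList φ l).Propositional := by
  induction l generalizing φ with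
  | nil => exact hφ
  | cons p l ih => exact ih ⟨hφ.substAtom (χ := .bot) trivial, hφ.substAtom (χ := .top) trivial⟩

variable [DecidableEq Atom]

theorem eval_substAtom {A B : Set Atom} {p : Atom} {χ : CTL Atom}
    (hB : B \ {p} = A \ {p}) (hp : p ∈ B ↔ Eval A χ) (φ : CTL Atom) :
    Eval A (substAtom p χ φ) ↔ Eval B φ := by
  induction φ with
  | atom q =>
    by_cases hq : q = p
    · simp [CTL.substAtom, hq, hp, Eval]
    · simpa [CTL.substAtom, hq, Eval] using
        (Set.diff_eq_diff_iff_forall.1 hB q (Set.notMem_singleton_iff.2 hq)).symm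
  | neg φ ih => exact not_congr ih
  | or φ ψ ihφ ihψ => exact or_congr ihφ ihψ
  | _ => exact Iff.rfl

theorem eval_forget1 {A : Set Atom} {p : Atom} {φ : CTL Atom} :
    Eval A (forget1 φ p) ↔ ∃ B, B \ {p} = A \ {p} ∧ Eval B φ := by
  constructor
  · rintro (h | h)
    · exact ⟨A \ {p}, by simp, (eval_substAtom (by simp) (by simp [Eval]) φ).1 h⟩
    · exact ⟨insert p A, by simp, (eval_substAtom (by simp) (by simp [Eval]) φ).1 h⟩
  · rintro ⟨B, hB, h⟩
    by_cases hp : p ∈ B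
    · exact Or.inr ((eval_substAtom hB (by simp [hp, Eval]) φ).2 h)
    · exact Or.inl ((eval_substAtom hB (by simp [hp, Eval]) φ).2 h)

theorem eval_forgetList {A : Set Atom} {φ : CTL Atom} {l : List Atom} :
    Eval A (forgetList φ l) ↔ ∃ B, B \ {q | q ∈ l} = A \ {q | q ∈ l} ∧ Eval B φ := by
  induction l generalizing A φ with
  | nil => simp [_root_.forgetList]
  | cons p l ih =>
    simp only [_root_.forgetList, ih, eval_forget1, Set.diff_eq_diff_iff_forall,
      List.mem_cons, Set.mem_ofPred_eq, not_or]
    constructor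
    · rintro ⟨B, hBA, C, hCB, hC⟩
      exact ⟨C, fun q hq => (hCB q hq.1).trans (hBA q hq.2), hC⟩
    · rintro ⟨C, hCA, hC⟩
      -- `p` gets its value from `A`, every other atom from `C`
      refine ⟨{q | if q = p then q ∈ A else q ∈ C}, fun q hq => ?_, C, fun q hq => ?_, hC⟩
      · by_cases hqp : q = p
        · simp [hqp]
        · simpa [hqp] using hCA q ⟨hqp, hq⟩
      · have hqp : q ≠ p := hq
        simp [hqp]

theorem eval_Forget [Finite Atom] {A : Set Atom} {φ : CTL Atom} {V : Set Atom} :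
    Eval A (Forget φ V) ↔ ∃ B, B \ V = A \ V ∧ Eval B φ := by
  simp only [Forget, eval_forgetList, mem_setToList, Set.ofPred_mem_eq]

end CTL

theorem vbisim_relabel {Atom : Type u} {V : Set Atom} (M : Kripke Atom)
    {L' : M.State → Set Atom} (hL : ∀ s, L' s \ V = M.L s \ V) (s : M.State) :
    VBisim V ⟨{ M with L := L' }, s⟩ ⟨M, s⟩ := by
  intro n
  induction n generalizing s with
  | zero => exact hL s
  | succ n ih => exact ⟨hL s, fun t h => ⟨t, h, ih t⟩, fun t h => ⟨t, h, ih t⟩⟩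

theorem InitKripke.exists_vbisim_root_label {Atom : Type u} {V : Set Atom} (K : InitKripke Atom)
    {B : Set Atom} (hB : B \ V = K.L K.s0 \ V) :
    ∃ K' : InitKripke Atom, K'.L K'.s0 = B ∧ VBisim V K'.toKS K.toKS := by
  classical
  let L' : K.State → Set Atom := Function.update K.L K.s0 B
  have hL : ∀ s, L' s \ V = K.L s \ V := by
    intro s
    by_cases hs : s = K.s0
    · subst hs; simpa [L'] using hB
    · simp [L', hs]
  exact ⟨⟨{ K.toKripke with L := L' }, K.s0, K.initial⟩, by simp [L'],
    vbisim_relabel K.toKripke hL K.s0⟩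

/-- on propositional formulas, CTL forgetting agrees with classical
propositional forgetting. -/
theorem forget_propositional {Atom : Type u} [DecidableEq Atom] [Finite Atom]
    (φ : CTL Atom) (hφ : φ.Propositional) (V : Set Atom) (ψ : CTL Atom)
    (h : IsForget φ V ψ) :
    CTLEquiv ψ (Forget φ V) := by
  have hForget : (Forget φ V).Propositional := hφ.forgetList _
  rw [CTLEquiv, h.2]
  ext K
  change (∃ K' ∈ CTLMod φ, VBisim V K'.toKS K.toKS) ↔ Sat K.toKripke (Forget φ V) K.s0
  rw [hForget.sat_iff_eval, CTL.eval_Forget]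
  constructor
  · rintro ⟨K', hK', hbisim⟩
    exact ⟨K'.L K'.s0, hbisim 0, (hφ.sat_iff_eval _ _).1 hK'⟩
  · rintro ⟨B, hB, hφB⟩
    obtain ⟨K', hK'B, hbisim⟩ := K.exists_vbisim_root_label hB
    exact ⟨K', (hφ.sat_iff_eval _ _).2 (hK'B ▸ hφB), hbisim⟩
end

section
/- Let φ be a CTL formula, V ⊆ 𝒜, and let ψ be a result of forgetting V from φ. Then ψ satisfies the forgetting postulates: (W) φ ⊨ ψ; (PP) for every formula η with IR(η,V), if φ ⊨ η then ψ ⊨ η; (NP) for every formula η with IR(η,V), if φ ⊭ η then ψ ⊭ η; (IR) IR(ψ,V). Equivalently, Mod(ψ) equals the set of models of the theory { η : φ ⊨ η and IR(η,V) }. -/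
universe u

/-! Formulas that do not mention `V` cannot tell `V`-bisimilar structures apart: since structures
are finite, `V`-bisimilarity can be pushed along successors and hence along infinite paths, which
is all the CTL path quantifiers see. A model of a forgetting result `ψ` is `V`-bisimilar to a model
of `φ`, so it inherits every consequence of `φ` that is irrelevant to `V`; conversely `ψ` is
itself such a consequence, which gives all postulates at once. -/

namespace BRel

variable {Atom : Type u} {V : Set Atom}

protected theorem refl : ∀ (n : ℕ) (K : KStruct Atom), BRel V n K K
  | 0, _ => rfl
  | n + 1, _ => ⟨rfl, fun t ht => ⟨t, ht, BRel.refl n _⟩, fun t ht => ⟨t, ht, BRel.refl n _⟩⟩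

protected theorem symm : ∀ (n : ℕ) {K₁ K₂ : KStruct Atom}, BRel V n K₁ K₂ → BRel V n K₂ K₁
  | 0, _, _, h => Eq.symm h
  | n + 1, _, _, ⟨hL, forth, back⟩ =>
    ⟨hL.symm,
     fun t₂ ht₂ => let ⟨t₁, ht₁, h⟩ := back t₂ ht₂; ⟨t₁, ht₁, BRel.symm n h⟩,
     fun t₁ ht₁ => let ⟨t₂, ht₂, h⟩ := forth t₁ ht₁; ⟨t₂, ht₂, BRel.symm n h⟩⟩

theorem of_succ : ∀ (n : ℕ) {K₁ K₂ : KStruct Atom}, BRel V (n + 1) K₁ K₂ → BRel V n K₁ K₂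
  | 0, _, _, h => h.1
  | n + 1, _, _, ⟨hL, forth, back⟩ =>
    ⟨hL,
     fun t₁ ht₁ => let ⟨t₂, ht₂, h⟩ := forth t₁ ht₁; ⟨t₂, ht₂, BRel.of_succ n h⟩,
     fun t₂ ht₂ => let ⟨t₁, ht₁, h⟩ := back t₂ ht₂; ⟨t₁, ht₁, BRel.of_succ n h⟩⟩

theorem of_le {m n : ℕ} (hmn : m ≤ n) {K₁ K₂ : KStruct Atom} (h : BRel V n K₁ K₂) :
    BRel V m K₁ K₂ := by
  induction hmn with
  | refl => exact h
  | step _ ih => exact ih (BRel.of_succ _ h)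

end BRel

namespace VBisim

variable {Atom : Type u} {V : Set Atom}

protected theorem refl (K : KStruct Atom) : VBisim V K K := fun n => BRel.refl n K

protected theorem symm {K₁ K₂ : KStruct Atom} (h : VBisim V K₁ K₂) : VBisim V K₂ K₁ :=
  fun n => BRel.symm n (h n)

/-- Each `B_{n+1}` gives a matching successor at depth `n`; since there are finitely many
successors, one of them is chosen for infinitely many `n`, hence matches at every depth. -/
theorem exists_succ {K₁ K₂ : KStruct Atom} (h : VBisim V K₁ K₂) {t₁ : K₁.M.State}
    (ht₁ : K₁.M.R K₁.s t₁) : ∃ t₂, K₂.M.R K₂.s t₂ ∧ VBisim V ⟨K₁.M, t₁⟩ ⟨K₂.M, t₂⟩ := by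
  choose f hfR hfB using fun n => (h (n + 1)).2.1 t₁ ht₁
  obtain ⟨t₂, hfiber⟩ := Finite.exists_infinite_fiber f
  have hinf : (f ⁻¹' {t₂}).Infinite := Set.infinite_coe_iff.mp hfiber
  obtain ⟨m, hm, -⟩ := hinf.exists_gt 0
  refine ⟨t₂, hm ▸ hfR m, fun n => ?_⟩
  obtain ⟨k, hk, hnk⟩ := hinf.exists_gt n
  exact BRel.of_le hnk.le (hk ▸ hfB k)

theorem exists_path {M₁ M₂ : Kripke Atom} {π : ℕ → M₁.State}
    (hπ : ∀ n, M₁.R (π n) (π (n + 1))) {s₂ : M₂.State} (h : VBisim V ⟨M₁, π 0⟩ ⟨M₂, s₂⟩) :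
    ∃ ρ : ℕ → M₂.State, ρ 0 = s₂ ∧ (∀ n, M₂.R (ρ n) (ρ (n + 1))) ∧
      ∀ n, VBisim V ⟨M₁, π n⟩ ⟨M₂, ρ n⟩ := by
  have step : ∀ (n : ℕ) (t : M₂.State), ∃ t', VBisim V ⟨M₁, π n⟩ ⟨M₂, t⟩ →
      M₂.R t t' ∧ VBisim V ⟨M₁, π (n + 1)⟩ ⟨M₂, t'⟩ := by
    intro n t
    by_cases hb : VBisim V ⟨M₁, π n⟩ ⟨M₂, t⟩
    · obtain ⟨t', ht'⟩ := hb.exists_succ (hπ n)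
      exact ⟨t', fun _ => ht'⟩
    · exact ⟨t, fun hb' => absurd hb' hb⟩
  choose next hnext using step
  let ρ : ℕ → M₂.State := fun n => Nat.rec s₂ next n
  have hρ : ∀ n, VBisim V ⟨M₁, π n⟩ ⟨M₂, ρ n⟩ := by
    intro n
    induction n with
    | zero => exact h
    | succ n ih => exact (hnext n (ρ n) ih).2
  exact ⟨ρ, rfl, fun n => (hnext n (ρ n) (hρ n)).1, hρ⟩

end VBisim

def PreservedByVBisim {Atom : Type u} (V : Set Atom) (φ : CTL Atom) : Prop :=
  ∀ (M₁ M₂ : Kripke Atom) s₁ s₂, VBisim V ⟨M₁, s₁⟩ ⟨M₂, s₂⟩ → Sat M₁ φ s₁ → Sat M₂ φ s₂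

section Invariance

variable {Atom : Type u} {V : Set Atom} {φ ψ : CTL Atom}

theorem sat_EX_of_vbisim (hφ : PreservedByVBisim V φ)
    {M₁ M₂ : Kripke Atom} {s₁ : M₁.State} {s₂ : M₂.State} (h : VBisim V ⟨M₁, s₁⟩ ⟨M₂, s₂⟩)
    (hsat : Sat M₁ (.EX φ) s₁) : Sat M₂ (.EX φ) s₂ := by
  obtain ⟨t₁, ht₁, hφt₁⟩ := hsat
  obtain ⟨t₂, ht₂, hb⟩ := h.exists_succ ht₁
  exact ⟨t₂, ht₂, hφ _ _ _ _ hb hφt₁⟩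

theorem sat_EG_of_vbisim (hφ : PreservedByVBisim V φ)
    {M₁ M₂ : Kripke Atom} {s₁ : M₁.State} {s₂ : M₂.State} (h : VBisim V ⟨M₁, s₁⟩ ⟨M₂, s₂⟩)
    (hsat : Sat M₁ (.EG φ) s₁) : Sat M₂ (.EG φ) s₂ := by
  obtain ⟨π, rfl, hπ, hφπ⟩ := hsat
  obtain ⟨ρ, hρ0, hρ, hb⟩ := VBisim.exists_path hπ h
  exact ⟨ρ, hρ0, hρ, fun n => hφ _ _ _ _ (hb n) (hφπ n)⟩

theorem sat_EU_of_vbisim (hφ : PreservedByVBisim V φ) (hψ : PreservedByVBisim V ψ)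
    {M₁ M₂ : Kripke Atom} {s₁ : M₁.State} {s₂ : M₂.State} (h : VBisim V ⟨M₁, s₁⟩ ⟨M₂, s₂⟩)
    (hsat : Sat M₁ (.EU φ ψ) s₁) : Sat M₂ (.EU φ ψ) s₂ := by
  obtain ⟨π, rfl, hπ, i, hψi, hφj⟩ := hsat
  obtain ⟨ρ, hρ0, hρ, hb⟩ := VBisim.exists_path hπ h
  exact ⟨ρ, hρ0, hρ, i, hψ _ _ _ _ (hb i) hψi, fun j hj => hφ _ _ _ _ (hb j) (hφj j hj)⟩

theorem sat_iff_of_vbisim (η : CTL Atom) (hη : Disjoint (CTL.vars η) V)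
    {M₁ M₂ : Kripke Atom} {s₁ : M₁.State} {s₂ : M₂.State} (h : VBisim V ⟨M₁, s₁⟩ ⟨M₂, s₂⟩) :
    Sat M₁ η s₁ ↔ Sat M₂ η s₂ := by
  induction η generalizing M₁ M₂ s₁ s₂ with
  | bot | top => exact Iff.rfl
  | atom p =>
    have hp : p ∉ V := Set.disjoint_singleton_left.mp hη
    simpa [Sat, hp] using Set.ext_iff.mp (h 0) p
  | neg φ ih => exact not_congr (ih hη h)
  | or φ ψ ihφ ihψ =>
    rw [CTL.vars, Set.disjoint_union_left] at hη
    exact or_congr (ihφ hη.1 h) (ihψ hη.2 h)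
  | EX φ ih =>
    have hφ : PreservedByVBisim V φ := fun _ _ _ _ hb => (ih hη hb).mp
    exact ⟨sat_EX_of_vbisim hφ h, sat_EX_of_vbisim hφ h.symm⟩
  | EG φ ih =>
    have hφ : PreservedByVBisim V φ := fun _ _ _ _ hb => (ih hη hb).mp
    exact ⟨sat_EG_of_vbisim hφ h, sat_EG_of_vbisim hφ h.symm⟩
  | EU φ ψ ihφ ihψ =>
    rw [CTL.vars, Set.disjoint_union_left] at hη
    have hφ : PreservedByVBisim V φ := fun _ _ _ _ hb => (ihφ hη.1 hb).mp
    have hψ : PreservedByVBisim V ψ := fun _ _ _ _ hb => (ihψ hη.2 hb).mp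
    exact ⟨sat_EU_of_vbisim hφ hψ h, sat_EU_of_vbisim hφ hψ h.symm⟩

theorem mem_CTLMod_of_IR_of_vbisim {η : CTL Atom} (hη : IR η V) {K K' : InitKripke Atom}
    (h : VBisim V K'.toKS K.toKS) (hK' : K' ∈ CTLMod η) : K ∈ CTLMod η := by
  obtain ⟨η', hη'V, hequiv⟩ := hη
  rw [hequiv] at hK' ⊢
  exact (sat_iff_of_vbisim η' (Set.disjoint_iff_inter_eq_empty.mpr hη'V) h).mp hK'

end Invariance

theorem forget_postulates_general {Atom : Type u} (φ : CTL Atom) (V : Set Atom)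
    (ψ : CTL Atom) (h : IsForget φ V ψ) :
    Entails φ ψ ∧
    (∀ η : CTL Atom, IR η V → Entails φ η → Entails ψ η) ∧
    (∀ η : CTL Atom, IR η V → ¬ Entails φ η → ¬ Entails ψ η) ∧
    IR ψ V ∧
    CTLMod ψ = {K : InitKripke Atom | ∀ η : CTL Atom, Entails φ η → IR η V → K ∈ CTLMod η} := by
  obtain ⟨hψV, hmod⟩ := h
  have weakening : Entails φ ψ := fun K hK => hmod ▸ ⟨K, hK, VBisim.refl _⟩
  have irrelevance : IR ψ V := ⟨ψ, hψV, rfl⟩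
  have positive : ∀ η : CTL Atom, IR η V → Entails φ η → Entails ψ η := by
    intro η hη hφη K hK
    rw [hmod] at hK
    obtain ⟨K', hK'φ, hK'K⟩ := hK
    exact mem_CTLMod_of_IR_of_vbisim hη hK'K (hφη hK'φ)
  refine ⟨weakening, positive, fun η _ hφη hψη => hφη (hψη.trans' weakening), irrelevance, ?_⟩
  ext K
  exact ⟨fun hK η hφη hη => positive η hη hφη hK, fun hK => hK ψ weakening irrelevance⟩

/-- a result of forgetting satisfies the forgetting postulates
(W), (PP), (NP) and (IR), and its models are exactly the models of the theory
`{η : φ ⊨ η and IR(η,V)}`. -/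
theorem forget_postulates {Atom : Type u} [Finite Atom] (φ : CTL Atom) (V : Set Atom)
    (ψ : CTL Atom) (h : IsForget φ V ψ) :
    Entails φ ψ ∧
    (∀ η : CTL Atom, IR η V → Entails φ η → Entails ψ η) ∧
    (∀ η : CTL Atom, IR η V → ¬ Entails φ η → ¬ Entails ψ η) ∧
    IR ψ V ∧
    CTLMod ψ = {K : InitKripke Atom | ∀ η : CTL Atom, Entails φ η → IR η V → K ∈ CTLMod η} :=
  forget_postulates_general φ V ψ h
end

section
/- Let ψ_1, ψ_2 be CTL formulas and V ⊆ 𝒜. If χ_1 is a result of forgetting V from ψ_1, χ_2 is a result of forgetting V from ψ_2, and χ is a result of forgetting V from ψ_1 ∨ ψ_2, then χ ≡ χ_1 ∨ χ_2. Moreover, if χ' is a result of forgetting V from ψ_1 ∧ ψ_2, then χ' ⊨ χ_1 ∧ χ_2. -/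
/-!
The models of a result of forgetting `V` from `φ` are the image of `Mod(φ)` under
`V`-bisimilarity. Taking the image under a relation commutes with unions and is monotone, hence
sends intersections into intersections; and `Mod` turns `∨`, `∧` into `∪`, `∩`.
-/

universe u

def bisimClosure {Atom : Type u} (V : Set Atom) (S : Set (InitKripke Atom)) :
    Set (InitKripke Atom) :=
  {K | ∃ K' ∈ S, VBisim V K'.toKS K.toKS}

section

variable {Atom : Type u}

theorem bisimClosure_union (V : Set Atom) (S T : Set (InitKripke Atom)) :
    bisimClosure V (S ∪ T) = bisimClosure V S ∪ bisimClosure V T := by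
  ext K
  simp only [bisimClosure, Set.mem_union, Set.mem_ofPred_eq, or_and_right, exists_or]

theorem bisimClosure_inter_subset (V : Set Atom) (S T : Set (InitKripke Atom)) :
    bisimClosure V (S ∩ T) ⊆ bisimClosure V S ∩ bisimClosure V T :=
  fun _ ⟨K', ⟨hS, hT⟩, hb⟩ => ⟨⟨K', hS, hb⟩, ⟨K', hT, hb⟩⟩

theorem CTLMod_or (φ ψ : CTL Atom) : CTLMod (φ.or ψ) = CTLMod φ ∪ CTLMod ψ := rfl

theorem CTLMod_and (φ ψ : CTL Atom) : CTLMod (φ.and ψ) = CTLMod φ ∩ CTLMod ψ := by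
  ext K
  simp only [CTLMod, CTL.and, Sat, Set.mem_inter_iff, Set.mem_ofPred_eq, not_or, not_not]

theorem IsForget.CTLMod_eq {φ ψ : CTL Atom} {V : Set Atom} (h : IsForget φ V ψ) :
    CTLMod ψ = bisimClosure V (CTLMod φ) :=
  h.2

end

theorem forget_or_and_general {Atom : Type u} (ψ1 ψ2 : CTL Atom) (V : Set Atom)
    (χ1 χ2 : CTL Atom) (h1 : IsForget ψ1 V χ1) (h2 : IsForget ψ2 V χ2) :
    (∀ χ : CTL Atom, IsForget (CTL.or ψ1 ψ2) V χ → CTLEquiv χ (CTL.or χ1 χ2)) ∧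
    (∀ χ' : CTL Atom, IsForget (ψ1.and ψ2) V χ' → Entails χ' (χ1.and χ2)) := by
  constructor
  · intro χ hχ
    rw [CTLEquiv, hχ.CTLMod_eq, CTLMod_or, bisimClosure_union, CTLMod_or, h1.CTLMod_eq,
      h2.CTLMod_eq]
  · intro χ' hχ'
    rw [Entails, hχ'.CTLMod_eq, CTLMod_and, CTLMod_and, h1.CTLMod_eq, h2.CTLMod_eq]
    exact bisimClosure_inter_subset V _ _

/-- forgetting distributes over disjunction, and the result of forgetting from a
conjunction entails the conjunction of the results of forgetting. -/
theorem forget_or_and {Atom : Type u} [Finite Atom] (ψ1 ψ2 : CTL Atom) (V : Set Atom)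
    (χ1 χ2 : CTL Atom) (h1 : IsForget ψ1 V χ1) (h2 : IsForget ψ2 V χ2) :
    (∀ χ : CTL Atom, IsForget (CTL.or ψ1 ψ2) V χ → CTLEquiv χ (CTL.or χ1 χ2)) ∧
    (∀ χ' : CTL Atom, IsForget (ψ1.and ψ2) V χ' → Entails χ' (χ1.and χ2)) :=
  forget_or_and_general ψ1 ψ2 V χ1 χ2 h1 h2
end
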